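/- arXiv:1401.0398 — 3 statements merged into one kernel-verified Lean document; each statement's English description precedes it below -/
import Mathlib

section
/- Let X be a finite set and γ > 1. The Tsallis score S(x,Q) := (γ−1)∑_y q(y)^γ − γ q(x)^{γ−1} is strictly proper: its associated divergence D(P,Q) = ∑_y p(y)^γ + (γ−1)∑_y q(y)^γ − γ∑_y p(y) q(y)^{γ−1} satisfies D(P,Q) ≥ 0 for all probability mass functions P, Q on X, with equality if and only if P = Q. -/
/-!
Pointwise, `a ^ γ + (γ - 1) b ^ γ - γ a b ^ (γ - 1)` is the Bregman gap
`f a - f b - f' b (a - b)` of the strictly convex function `f x = x ^ γ` on `[0, ∞)`,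
so it is nonnegative and vanishes only at `a = b`; the divergence is the sum of these gaps.
-/

open Set

lemma StrictConvexOn.add_mul_sub_lt_of_hasDerivAt {S : Set ℝ} {f : ℝ → ℝ} {x y f' : ℝ}
    (hf : StrictConvexOn ℝ S f) (hx : x ∈ S) (hy : y ∈ S) (hxy : x ≠ y)
    (hf' : HasDerivAt f f' y) : f y + f' * (x - y) < f x := by
  rcases hxy.lt_or_gt with hlt | hgt
  · have h := hf.slope_lt_of_hasDerivAt hx hy hlt hf'
    rw [slope_def_field, div_lt_iff₀ (sub_pos.2 hlt)] at h
    linarith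
  · have h := hf.lt_slope_of_hasDerivAt hy hx hgt hf'
    rw [slope_def_field, lt_div_iff₀ (sub_pos.2 hgt)] at h
    linarith

namespace Real

lemma mul_rpow_sub_one {x γ : ℝ} (hx : 0 ≤ x) (hγ : γ ≠ 0) : x * x ^ (γ - 1) = x ^ γ := by
  conv_rhs => rw [← add_sub_cancel 1 γ, rpow_add' hx (by simpa using hγ), rpow_one]

lemma tsallis_gap_pos {γ a b : ℝ} (hγ : 1 < γ) (ha : 0 ≤ a) (hb : 0 ≤ b) (hab : a ≠ b) :
    0 < a ^ γ + (γ - 1) * b ^ γ - γ * (a * b ^ (γ - 1)) := by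
  have hb' := mul_rpow_sub_one hb (by linarith : γ ≠ 0)
  have h := (strictConvexOn_rpow hγ).add_mul_sub_lt_of_hasDerivAt (mem_Ici.2 ha) (mem_Ici.2 hb)
    hab (hasDerivAt_rpow_const (Or.inr hγ.le))
  linear_combination h + γ * hb'

lemma tsallis_gap_self {γ a : ℝ} (hγ : γ ≠ 0) (ha : 0 ≤ a) :
    a ^ γ + (γ - 1) * a ^ γ - γ * (a * a ^ (γ - 1)) = 0 := by
  rw [mul_rpow_sub_one ha hγ]
  ring

lemma tsallis_gap_nonneg {γ a b : ℝ} (hγ : 1 < γ) (ha : 0 ≤ a) (hb : 0 ≤ b) :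
    0 ≤ a ^ γ + (γ - 1) * b ^ γ - γ * (a * b ^ (γ - 1)) := by
  rcases eq_or_ne a b with rfl | hab
  · exact (tsallis_gap_self (by linarith) ha).ge
  · exact (tsallis_gap_pos hγ ha hb hab).le

lemma tsallis_gap_eq_zero_iff {γ a b : ℝ} (hγ : 1 < γ) (ha : 0 ≤ a) (hb : 0 ≤ b) :
    a ^ γ + (γ - 1) * b ^ γ - γ * (a * b ^ (γ - 1)) = 0 ↔ a = b := by
  refine ⟨fun h => ?_, fun hab => hab ▸ tsallis_gap_self (by linarith) ha⟩
  by_contra hab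
  exact (tsallis_gap_pos hγ ha hb hab).ne' h

end Real

theorem tsallis_score_strictly_proper_general
    {X : Type*} [Fintype X]
    (γ : ℝ) (hγ : 1 < γ)
    (p q : X → ℝ)
    (hp_nonneg : ∀ x, 0 ≤ p x) (hq_nonneg : ∀ x, 0 ≤ q x) :
    0 ≤ (∑ y, p y ^ γ) + (γ - 1) * (∑ y, q y ^ γ) - γ * ∑ y, p y * q y ^ (γ - 1) ∧
    ((∑ y, p y ^ γ) + (γ - 1) * (∑ y, q y ^ γ) - γ * (∑ y, p y * q y ^ (γ - 1)) = 0 ↔ p = q) := by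
  have hsum : (∑ y, p y ^ γ) + (γ - 1) * (∑ y, q y ^ γ) - γ * (∑ y, p y * q y ^ (γ - 1))
      = ∑ y, (p y ^ γ + (γ - 1) * q y ^ γ - γ * (p y * q y ^ (γ - 1))) := by
    rw [Finset.sum_sub_distrib, Finset.sum_add_distrib, Finset.mul_sum, Finset.mul_sum]
  have hgap_nonneg y := Real.tsallis_gap_nonneg hγ (hp_nonneg y) (hq_nonneg y)
  rw [hsum, Finset.sum_eq_zero_iff_of_nonneg fun y _ => hgap_nonneg y, funext_iff]
  refine ⟨Finset.sum_nonneg fun y _ => hgap_nonneg y, forall_congr' fun y => ?_⟩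
  simpa using Real.tsallis_gap_eq_zero_iff hγ (hp_nonneg y) (hq_nonneg y)

/-- The Tsallis score (γ > 1) is strictly proper: its divergence
`D(P,Q) = ∑ p^γ + (γ−1)∑ q^γ − γ∑ p q^{γ−1}` is nonnegative, vanishing iff `P = Q`. -/
theorem tsallis_score_strictly_proper
    {X : Type*} [Fintype X]
    (γ : ℝ) (hγ : 1 < γ)
    (p q : X → ℝ)
    (hp_nonneg : ∀ x, 0 ≤ p x) (hq_nonneg : ∀ x, 0 ≤ q x)
    (hp_sum : ∑ x, p x = 1) (hq_sum : ∑ x, q x = 1) :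
    0 ≤ (∑ y, p y ^ γ) + (γ - 1) * (∑ y, q y ^ γ) - γ * ∑ y, p y * q y ^ (γ - 1) ∧
    ((∑ y, p y ^ γ) + (γ - 1) * (∑ y, q y ^ γ) - γ * (∑ y, p y * q y ^ (γ - 1)) = 0 ↔ p = q) :=
  tsallis_score_strictly_proper_general γ hγ p q hp_nonneg hq_nonneg
end

section
/- Let P be a probability density on ℝᵏ that is smooth, strictly positive, with ∇log p and ∇log q square-integrable under p, and such that boundary terms vanish (p(y)∇log q(y) → 0 as |y| → ∞ in the sense that the divergence theorem applies with zero boundary contribution). Then the expected Hyvärinen score S(P,Q) := E_{Y∼P}[Δ log q(Y) + ½|∇log q(Y)|²] satisfies S(P,Q) − S(P,P) = ½ E_{Y∼P}|∇log p(Y) − ∇log q(Y)|² ≥ 0, with equality iff ∇log p = ∇log q p-almost everywhere. Hence the Hyvärinen score is proper. -/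
/-!
Write `sₚ = ∇log p`, `s_q = ∇log q`. Integration by parts turns `E_P[Δ log q]` into
`-E_P⟨sₚ, s_q⟩`, so both expected scores become quadratic expressions in the scores and their
difference is the completed square `½ E_P‖sₚ - s_q‖²`. Cauchy–Schwarz makes the cross term
integrable, and a nonnegative integrand has zero integral iff it vanishes `P`-almost everywhere.
-/

open MeasureTheory RealInnerProductSpace

/-- The Laplacian `Δ f x = ∑ i ∂²f/∂xᵢ²` of `f : ℝᵏ → ℝ`. -/
noncomputable def lap {k : ℕ} (f : EuclideanSpace ℝ (Fin k) → ℝ)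
    (x : EuclideanSpace ℝ (Fin k)) : ℝ :=
  ∑ i, fderiv ℝ (fun z => fderiv ℝ f z (EuclideanSpace.single i (1:ℝ))) x
    (EuclideanSpace.single i (1:ℝ))

/-- The Hyvärinen score `S(x,Q) = Δ log q(x) + ½|∇ log q(x)|²`. -/
noncomputable def hyvScore {k : ℕ} (q : EuclideanSpace ℝ (Fin k) → ℝ)
    (x : EuclideanSpace ℝ (Fin k)) : ℝ :=
  lap (fun z => Real.log (q z)) x + (1 / 2) * ‖gradient (fun z => Real.log (q z)) x‖ ^ 2

theorem measurable_gradient {E : Type*} [NormedAddCommGroup E] [InnerProductSpace ℝ E]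
    [CompleteSpace E] [MeasurableSpace E] [BorelSpace E] (f : E → ℝ) :
    Measurable (gradient f) :=
  (InnerProductSpace.toDual ℝ E).symm.continuous.measurable.comp (measurable_fderiv ℝ f)

section WeightedL2

variable {α E : Type*} [MeasurableSpace α] {μ : Measure α}
  [NormedAddCommGroup E] [InnerProductSpace ℝ E] {w : α → ℝ} {u v : α → E}

theorem integrable_mul_inner (hw : 0 ≤ w) (hwm : AEStronglyMeasurable w μ)
    (hu : AEStronglyMeasurable u μ) (hv : AEStronglyMeasurable v μ)
    (hu2 : Integrable (fun a => w a * ‖u a‖ ^ 2) μ)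
    (hv2 : Integrable (fun a => w a * ‖v a‖ ^ 2) μ) :
    Integrable (fun a => w a * ⟪u a, v a⟫) μ := by
  refine ((hu2.add hv2).const_mul (1 / 2)).mono' (hwm.mul (hu.inner hv)) (ae_of_all _ fun a => ?_)
  have hcs : |⟪u a, v a⟫| ≤ (1 / 2) * (‖u a‖ ^ 2 + ‖v a‖ ^ 2) := by
    nlinarith [abs_real_inner_le_norm (u a) (v a), two_mul_le_add_sq ‖u a‖ ‖v a‖]
  calc ‖w a * ⟪u a, v a⟫‖ = w a * |⟪u a, v a⟫| := by
        rw [Real.norm_eq_abs, abs_mul, abs_of_nonneg (hw a)]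
    _ ≤ w a * ((1 / 2) * (‖u a‖ ^ 2 + ‖v a‖ ^ 2)) := mul_le_mul_of_nonneg_left hcs (hw a)
    _ = (1 / 2) * (w a * ‖u a‖ ^ 2 + w a * ‖v a‖ ^ 2) := by ring

theorem mul_norm_sub_sq_eq (w : ℝ) (x y : E) :
    w * ‖x - y‖ ^ 2 = w * ‖x‖ ^ 2 - 2 * (w * ⟪x, y⟫) + w * ‖y‖ ^ 2 := by
  rw [norm_sub_sq_real]; ring

theorem integrable_mul_norm_sub_sq (hu2 : Integrable (fun a => w a * ‖u a‖ ^ 2) μ)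
    (hv2 : Integrable (fun a => w a * ‖v a‖ ^ 2) μ)
    (huv : Integrable (fun a => w a * ⟪u a, v a⟫) μ) :
    Integrable (fun a => w a * ‖u a - v a‖ ^ 2) μ := by
  simp only [mul_norm_sub_sq_eq]
  exact (hu2.sub (huv.const_mul 2)).add hv2

theorem integral_mul_norm_sub_sq (hu2 : Integrable (fun a => w a * ‖u a‖ ^ 2) μ)
    (hv2 : Integrable (fun a => w a * ‖v a‖ ^ 2) μ)
    (huv : Integrable (fun a => w a * ⟪u a, v a⟫) μ) :
    ∫ a, w a * ‖u a - v a‖ ^ 2 ∂μ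
      = ∫ a, w a * ‖u a‖ ^ 2 ∂μ - 2 * ∫ a, w a * ⟪u a, v a⟫ ∂μ + ∫ a, w a * ‖v a‖ ^ 2 ∂μ := by
  have hu2_sub_uv : Integrable (fun a => w a * ‖u a‖ ^ 2 - 2 * (w a * ⟪u a, v a⟫)) μ :=
    hu2.sub (huv.const_mul 2)
  simp only [mul_norm_sub_sq_eq]
  rw [integral_add hu2_sub_uv hv2, integral_sub hu2 (huv.const_mul 2), integral_const_mul]

theorem integral_mul_eq_zero_iff_ae_withDensity {g : α → ℝ} (hw : 0 ≤ w)
    (hwm : AEMeasurable w μ) (hg : 0 ≤ g) (hwg : Integrable (fun a => w a * g a) μ) :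
    ∫ a, w a * g a ∂μ = 0 ↔ ∀ᵐ a ∂μ.withDensity (fun a => ENNReal.ofReal (w a)), g a = 0 := by
  rw [integral_eq_zero_iff_of_nonneg (fun a => mul_nonneg (hw a) (hg a)) hwg,
    ae_withDensity_iff' hwm.ennreal_ofReal]
  refine Filter.eventually_congr (ae_of_all _ fun a => ?_)
  rcases (show 0 ≤ w a from hw a).eq_or_lt with hwa | hpos
  · simp [← hwa]
  · simp [hpos, hpos.ne']

end WeightedL2

theorem integral_mul_hyvScore {k : ℕ} {μ : Measure (EuclideanSpace ℝ (Fin k))}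
    {p q : EuclideanSpace ℝ (Fin k) → ℝ} (hS : Integrable (fun y => p y * hyvScore q y) μ)
    (hL2 : Integrable (fun y => p y * ‖gradient (fun z => Real.log (q z)) y‖ ^ 2) μ) :
    ∫ y, p y * hyvScore q y ∂μ
      = ∫ y, p y * lap (fun z => Real.log (q z)) y ∂μ
        + (1 / 2) * ∫ y, p y * ‖gradient (fun z => Real.log (q z)) y‖ ^ 2 ∂μ := by
  have hlap : ∫ y, p y * lap (fun z => Real.log (q z)) y ∂μ
      = ∫ y, p y * hyvScore q y
          - (1 / 2) * (p y * ‖gradient (fun z => Real.log (q z)) y‖ ^ 2) ∂μ := by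
    congr 1; funext y; rw [hyvScore]; ring
  rw [hlap, integral_sub hS (hL2.const_mul _), integral_const_mul]; ring

theorem hyvarinen_score_proper_general
    {k : ℕ} (p q : EuclideanSpace ℝ (Fin k) → ℝ)
    (hp : ContDiff ℝ 2 p)
    (hp_pos : ∀ y, 0 < p y)
    -- square integrability of the log-gradients under p
    (hL2p : Integrable (fun y => p y * ‖gradient (fun z => Real.log (p z)) y‖ ^ 2))
    (hL2q : Integrable (fun y => p y * ‖gradient (fun z => Real.log (q z)) y‖ ^ 2))
    (hS_int_q : Integrable (fun y => p y * hyvScore q y))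
    (hS_int_p : Integrable (fun y => p y * hyvScore p y))
    -- integration by parts with vanishing boundary terms:
    (hibp_q : ∫ y, p y * lap (fun z => Real.log (q z)) y
        = -∫ y, p y * (inner ℝ (gradient (fun z => Real.log (p z)) y)
            (gradient (fun z => Real.log (q z)) y) : ℝ))
    (hibp_p : ∫ y, p y * lap (fun z => Real.log (p z)) y
        = -∫ y, p y * (inner ℝ (gradient (fun z => Real.log (p z)) y)
            (gradient (fun z => Real.log (p z)) y) : ℝ)) :
    ((∫ y, p y * hyvScore q y) - ∫ y, p y * hyvScore p y
        = (1 / 2) * ∫ y, p y * ‖gradient (fun z => Real.log (p z)) y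
            - gradient (fun z => Real.log (q z)) y‖ ^ 2) ∧
    (0 ≤ (∫ y, p y * hyvScore q y) - ∫ y, p y * hyvScore p y) ∧
    ((∫ y, p y * hyvScore q y) - (∫ y, p y * hyvScore p y) = 0 ↔
      ∀ᵐ y ∂(volume.withDensity fun y => ENNReal.ofReal (p y)),
        gradient (fun z => Real.log (p z)) y = gradient (fun z => Real.log (q z)) y) := by
  have hp_nonneg : 0 ≤ p := fun y => (hp_pos y).le
  have hp_meas : Measurable p := hp.continuous.measurable
  have hcross := integrable_mul_inner hp_nonneg hp_meas.aestronglyMeasurable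
    (measurable_gradient _).aestronglyMeasurable (measurable_gradient _).aestronglyMeasurable
    hL2p hL2q
  have hgap : (∫ y, p y * hyvScore q y) - ∫ y, p y * hyvScore p y
      = (1 / 2) * ∫ y, p y * ‖gradient (fun z => Real.log (p z)) y
          - gradient (fun z => Real.log (q z)) y‖ ^ 2 := by
    rw [integral_mul_hyvScore hS_int_q hL2q, integral_mul_hyvScore hS_int_p hL2p, hibp_q, hibp_p,
      integral_mul_norm_sub_sq hL2p hL2q hcross]
    simp only [real_inner_self_eq_norm_sq]
    ring
  refine ⟨hgap, hgap ▸ mul_nonneg (by norm_num)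
    (integral_nonneg fun y => mul_nonneg (hp_nonneg y) (sq_nonneg _)), ?_⟩
  rw [hgap, mul_eq_zero, integral_mul_eq_zero_iff_ae_withDensity hp_nonneg hp_meas.aemeasurable
    (fun y => sq_nonneg _) (integrable_mul_norm_sub_sq hL2p hL2q hcross)]
  simp [sub_eq_zero]

/-- Under regularity (smoothness, positivity, square-integrable score
gradients, and validity of integration by parts with vanishing boundary terms), the
expected Hyvärinen score satisfies
`S(P,Q) − S(P,P) = ½ E_P ‖∇log p − ∇log q‖² ≥ 0`, with equality iff
`∇log p = ∇log q` `P`-almost everywhere; hence the Hyvärinen score is proper. -/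
theorem hyvarinen_score_proper
    {k : ℕ} (p q : EuclideanSpace ℝ (Fin k) → ℝ)
    (hp : ContDiff ℝ 2 p) (hq : ContDiff ℝ 2 q)
    (hp_pos : ∀ y, 0 < p y) (hq_pos : ∀ y, 0 < q y)
    (hp_prob : ∫ y, p y = 1)
    -- square integrability of the log-gradients under p
    (hL2p : Integrable (fun y => p y * ‖gradient (fun z => Real.log (p z)) y‖ ^ 2))
    (hL2q : Integrable (fun y => p y * ‖gradient (fun z => Real.log (q z)) y‖ ^ 2))
    (hS_int_q : Integrable (fun y => p y * hyvScore q y))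
    (hS_int_p : Integrable (fun y => p y * hyvScore p y))
    -- integration by parts with vanishing boundary terms:
    (hibp_q : ∫ y, p y * lap (fun z => Real.log (q z)) y
        = -∫ y, p y * (inner ℝ (gradient (fun z => Real.log (p z)) y)
            (gradient (fun z => Real.log (q z)) y) : ℝ))
    (hibp_p : ∫ y, p y * lap (fun z => Real.log (p z)) y
        = -∫ y, p y * (inner ℝ (gradient (fun z => Real.log (p z)) y)
            (gradient (fun z => Real.log (p z)) y) : ℝ)) :
    ((∫ y, p y * hyvScore q y) - ∫ y, p y * hyvScore p y
        = (1 / 2) * ∫ y, p y * ‖gradient (fun z => Real.log (p z)) y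
            - gradient (fun z => Real.log (q z)) y‖ ^ 2) ∧
    (0 ≤ (∫ y, p y * hyvScore q y) - ∫ y, p y * hyvScore p y) ∧
    ((∫ y, p y * hyvScore q y) - (∫ y, p y * hyvScore p y) = 0 ↔
      ∀ᵐ y ∂(volume.withDensity fun y => ENNReal.ofReal (p y)),
        gradient (fun z => Real.log (p z)) y = gradient (fun z => Real.log (q z)) y) :=
  hyvarinen_score_proper_general p q hp hp_pos hL2p hL2q hS_int_q hS_int_p hibp_q hibp_p
end

section
/- Consider the location model on ℝ with density p_θ(x) = f(x−θ), f positive and differentiable, and the Bregman score with convex twice-differentiable ψ. The derivative of the score with respect to θ satisfies s(x,θ) := ∂S(x,θ)/∂θ = ψ''(f(u)) f'(u) with u = x−θ, where S(x,θ) = −ψ'(f(x−θ)) − ∫[ψ(f(y−θ)) − f(y−θ)ψ'(f(y−θ))]dy. Consequently, if f' is bounded on ℝ and ψ'' is bounded on (0,M] for every finite M, then s(x,θ) is bounded in x for each fixed θ (B-robustness). -/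
open MeasureTheory

/-- The Bregman score of the location model `p_θ(x) = f(x−θ)`:
`S(x,θ) = −ψ'(f(x−θ)) − ∫ [ψ(f(y−θ)) − f(y−θ) ψ'(f(y−θ))] dy`. -/
noncomputable def locBregScore (ψ' : ℝ → ℝ) (ψ : ℝ → ℝ) (f : ℝ → ℝ) (x θ : ℝ) : ℝ :=
  -ψ' (f (x - θ)) - ∫ y, (ψ (f (y - θ)) - f (y - θ) * ψ' (f (y - θ)))

/-!
The integral term of the score is translation invariant, so only `-ψ'(f(x - θ))` depends on `θ`
and the chain rule gives `s(x, θ) = ψ''(f(x - θ)) f'(x - θ)`. A nonnegative integrable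
`K`-Lipschitz function is bounded: `f ≥ f(u)/2` on an interval of length `f(u)/(2K)` ending at
`u`, so `f(u)² ≤ 4K ∫ f`. Hence `f(x - θ)` stays in some `(0, M]`, where `ψ''` is bounded.
-/

open NNReal

theorem locBregScore_eq (ψ' ψ f : ℝ → ℝ) (x θ : ℝ) :
    locBregScore ψ' ψ f x θ = -ψ' (f (x - θ)) - ∫ y, (ψ (f y) - f y * ψ' (f y)) := by
  rw [locBregScore, integral_sub_right_eq_self (fun y => ψ (f y) - f y * ψ' (f y)) θ]

theorem hasDerivAt_locBregScore {ψ' ψ f : ℝ → ℝ} {f' ψ'' x θ : ℝ}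
    (hf : HasDerivAt f f' (x - θ)) (hψ' : HasDerivAt ψ' ψ'' (f (x - θ))) :
    HasDerivAt (fun t => locBregScore ψ' ψ f x t) (ψ'' * f') θ := by
  simp only [locBregScore_eq]
  have hshift : HasDerivAt (fun t => f (x - t)) (-f') θ := by
    simpa using hf.comp_const_sub x θ
  simpa using ((hψ'.comp θ hshift).neg).sub_const (∫ y, (ψ (f y) - f y * ψ' (f y)))

theorem LipschitzWith.sq_le_mul_integral {f : ℝ → ℝ} {K : ℝ≥0} (hK : 0 < K)
    (hf : LipschitzWith K f) (hf_nonneg : ∀ u, 0 ≤ f u) (hf_int : Integrable f) (u : ℝ) :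
    f u ^ 2 ≤ 4 * K * ∫ y, f y := by
  have hK' : (0 : ℝ) < K := hK
  set r := f u / (2 * K) with hr_def
  have hr : 0 ≤ r := div_nonneg (hf_nonneg u) (by positivity)
  have hKr : (K : ℝ) * r = f u / 2 := by rw [hr_def]; field_simp
  have hhalf : ∀ y ∈ Set.Icc (u - r) u, f u / 2 ≤ f y := by
    intro y hy
    have hdist := hf.dist_le_mul u y
    rw [Real.dist_eq, Real.dist_eq, abs_of_nonneg (by linarith [hy.2] : 0 ≤ u - y)] at hdist
    nlinarith [le_abs_self (f u - f y), hy.1, hK]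
  calc f u ^ 2 = 4 * K * (f u / 2 * r) := by linear_combination (-2 * f u) * hKr
    _ ≤ 4 * K * ∫ y in Set.Icc (u - r) u, f y := by
      gcongr
      simpa [Real.volume_real_Icc_of_le (by linarith : u - r ≤ u)] using
        setIntegral_ge_of_const_le_real measurableSet_Icc measure_Icc_lt_top.ne hhalf
          hf_int.integrableOn
    _ ≤ 4 * K * ∫ y, f y := by
      have := setIntegral_le_integral (s := Set.Icc (u - r) u) hf_int
        (Filter.Eventually.of_forall hf_nonneg)
      gcongr

theorem LipschitzWith.bddAbove_range_of_integrable {f : ℝ → ℝ} {K : ℝ≥0}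
    (hf : LipschitzWith K f) (hf_nonneg : ∀ u, 0 ≤ f u) (hf_int : Integrable f) :
    BddAbove (Set.range f) := by
  refine ⟨Real.sqrt (4 * (K + 1) * ∫ y, f y), ?_⟩
  rintro _ ⟨u, rfl⟩
  refine Real.le_sqrt_of_sq_le ?_
  exact_mod_cast (hf.weaken (le_add_of_nonneg_right zero_le_one)).sq_le_mul_integral
    (by positivity) hf_nonneg hf_int u

theorem location_bregman_score_and_robustness_general
    (f f' : ℝ → ℝ) (hf_pos : ∀ u, 0 < f u)
    (hf_deriv : ∀ u, HasDerivAt f (f' u) u)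
    (hf_int : Integrable f)
    (ψ ψ' ψ'' : ℝ → ℝ)
    (hψ'_deriv : ∀ t : ℝ, 0 < t → HasDerivAt ψ' (ψ'' t) t) :
    (∀ x θ : ℝ, HasDerivAt (fun t => locBregScore ψ' ψ f x t)
        (ψ'' (f (x - θ)) * f' (x - θ)) θ) ∧
    ((∃ C, ∀ u, |f' u| ≤ C) →
      (∀ M : ℝ, 0 < M → ∃ K, ∀ t ∈ Set.Ioc (0:ℝ) M, |ψ'' t| ≤ K) →
      ∀ θ : ℝ, ∃ B, ∀ x : ℝ, |ψ'' (f (x - θ)) * f' (x - θ)| ≤ B) := by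
  refine ⟨fun x θ => hasDerivAt_locBregScore (hf_deriv _) (hψ'_deriv _ (hf_pos _)), ?_⟩
  rintro ⟨C, hC⟩ hψ''_bdd θ
  have hf_lip : LipschitzWith C.toNNReal f :=
    lipschitzWith_of_nnnorm_deriv_le (fun u => (hf_deriv u).differentiableAt) fun u => by
      rw [(hf_deriv u).deriv, ← NNReal.coe_le_coe, coe_nnnorm, Real.norm_eq_abs]
      exact (hC u).trans (Real.le_coe_toNNReal C)
  obtain ⟨M, hM⟩ := hf_lip.bddAbove_range_of_integrable (fun u => (hf_pos u).le) hf_int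
  obtain ⟨K, hK⟩ := hψ''_bdd M ((hf_pos 0).trans_le (hM ⟨0, rfl⟩))
  have hf_mem (x : ℝ) : f (x - θ) ∈ Set.Ioc 0 M := ⟨hf_pos _, hM ⟨_, rfl⟩⟩
  refine ⟨K * C, fun x => ?_⟩
  rw [abs_mul]
  exact mul_le_mul (hK _ (hf_mem x)) (hC _) (abs_nonneg _) ((abs_nonneg _).trans (hK _ (hf_mem x)))

/-- For the location model with positive differentiable density `f` and the
Bregman score with convex twice-differentiable `ψ`, the score function is
`s(x,θ) = ψ''(f(x−θ)) f'(x−θ)`; consequently, if `f'` is bounded on `ℝ` and `ψ''` is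
bounded on `(0,M]` for every finite `M`, then `s(·,θ)` is bounded for each `θ`
(B-robustness). -/
theorem location_bregman_score_and_robustness
    (f f' : ℝ → ℝ) (hf_pos : ∀ u, 0 < f u)
    (hf_deriv : ∀ u, HasDerivAt f (f' u) u)
    (hf_int : Integrable f) (hf_prob : ∫ u, f u = 1)
    (ψ ψ' ψ'' : ℝ → ℝ)
    (hψ_conv : ConvexOn ℝ (Set.Ioi (0:ℝ)) ψ)
    (hψ_deriv : ∀ t : ℝ, 0 < t → HasDerivAt ψ (ψ' t) t)
    (hψ'_deriv : ∀ t : ℝ, 0 < t → HasDerivAt ψ' (ψ'' t) t)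
    (hint : ∀ θ : ℝ, Integrable fun y => ψ (f (y - θ)) - f (y - θ) * ψ' (f (y - θ))) :
    (∀ x θ : ℝ, HasDerivAt (fun t => locBregScore ψ' ψ f x t)
        (ψ'' (f (x - θ)) * f' (x - θ)) θ) ∧
    ((∃ C, ∀ u, |f' u| ≤ C) →
      (∀ M : ℝ, 0 < M → ∃ K, ∀ t ∈ Set.Ioc (0:ℝ) M, |ψ'' t| ≤ K) →
      ∀ θ : ℝ, ∃ B, ∀ x : ℝ, |ψ'' (f (x - θ)) * f' (x - θ)| ≤ B) :=
  location_bregman_score_and_robustness_general f f' hf_pos hf_deriv hf_int ψ ψ' ψ'' hψ'_deriv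
end
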